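/- arXiv:2102.00857 — 2 statements merged into one kernel-verified Lean document; each statement's English description precedes it below -/
import Mathlib

section
/- A Banach space X has property (K) if and only if K₁(X) = 0, where K₁(X) = sup over weak* null sequences (f_n) in B_{X*} of inf over convex block subsequences (g_n) of (f_n) of α((g_n)). (Property (K): every weak* null sequence in X* has a convex block subsequence (g_n) with α((g_n)) = 0, i.e. Mackey-null.) -/
open Filter Topology Metric Set NormedSpace

noncomputable section

/-- `y` is a convex block subsequence of `x`. -/
def IsConvexBlock {E : Type*} [AddCommGroup E] [Module ℝ E] (x y : ℕ → E) : Prop :=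
  ∃ k : ℕ → ℕ, k 0 = 0 ∧ StrictMono k ∧
    ∀ n, y n ∈ convexHull ℝ (x '' Set.Ico (k n) (k (n + 1)))

variable (X : Type*) [NormedAddCommGroup X] [NormedSpace ℝ X]

/-- A set is weakly compact if its image in the weak topology is compact. -/
def WeaklyCompact (K : Set X) : Prop := IsCompact (toWeakSpace ℝ X '' K)

/-- A sequence is weakly null. -/
def WeaklyNull (x : ℕ → X) : Prop :=
  ∀ f : X →L[ℝ] ℝ, Tendsto (fun n => f (x n)) atTop (𝓝 0)

/-- A sequence in the dual is weak* null. -/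
def WeakStarNull (f : ℕ → X →L[ℝ] ℝ) : Prop :=
  ∀ x : X, Tendsto (fun n => f n x) atTop (𝓝 0)

/-- A sequence in the dual is weak* Cauchy. -/
def WeakStarCauchy (f : ℕ → X →L[ℝ] ℝ) : Prop :=
  ∀ x : X, ∃ L : ℝ, Tendsto (fun n => f n x) atTop (𝓝 L)

variable {X}

/-- α((f_n)) = sup over weakly compact K ⊆ B_X of limsup_n sup_{x ∈ K} |⟨f_n, x⟩|. -/
def alphaQ (f : ℕ → X →L[ℝ] ℝ) : ℝ :=
  sSup { r | ∃ K : Set X, K ⊆ closedBall 0 1 ∧ WeaklyCompact X K ∧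
    r = limsup (fun n => sSup ((fun x => |f n x|) '' K)) atTop }

/-- β((f_n)) = sup over weakly null (x_n) in B_X of limsup_n |⟨f_n, x_n⟩|. -/
def betaQ (f : ℕ → X →L[ℝ] ℝ) : ℝ :=
  sSup { r | ∃ x : ℕ → X, (∀ n, x n ∈ closedBall (0 : X) 1) ∧ WeaklyNull X x ∧
    r = limsup (fun n => |f n (x n)|) atTop }

/-- ca_{ρ*}((f_n)): measures Mackey-Cauchyness. -/
def caRho (f : ℕ → X →L[ℝ] ℝ) : ℝ :=
  sSup { r | ∃ K : Set X, K ⊆ closedBall 0 1 ∧ WeaklyCompact X K ∧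
    r = ⨅ n : ℕ, sSup { t | ∃ k ≥ n, ∃ l ≥ n, ∃ x ∈ K, t = |(f k - f l) x| } }

/-- ca((z_n)) = inf_n sup_{k,l ≥ n} ‖z_k - z_l‖. -/
def caSeq {E : Type*} [NormedAddCommGroup E] (z : ℕ → E) : ℝ :=
  ⨅ n : ℕ, sSup { r | ∃ k ≥ n, ∃ l ≥ n, r = ‖z k - z l‖ }

variable (X)

def K1 : ℝ :=
  sSup { r | ∃ f : ℕ → X →L[ℝ] ℝ, (∀ n, ‖f n‖ ≤ 1) ∧ WeakStarNull X f ∧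
    r = sInf { s | ∃ g, IsConvexBlock f g ∧ s = alphaQ g } }

def K2 : ℝ :=
  sSup { r | ∃ f : ℕ → X →L[ℝ] ℝ, (∀ n, ‖f n‖ ≤ 1) ∧ WeakStarNull X f ∧
    r = sInf { s | ∃ g, IsConvexBlock f g ∧ s = betaQ g } }

def K3 : ℝ :=
  sSup { r | ∃ f : ℕ → X →L[ℝ] ℝ, (∀ n, ‖f n‖ ≤ 1) ∧ WeakStarCauchy X f ∧
    r = sInf { s | ∃ g, IsConvexBlock f g ∧ s = caRho g } }

/-- Property (K). -/
def PropertyK : Prop :=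
  ∀ f : ℕ → X →L[ℝ] ℝ, WeakStarNull X f → ∃ g, IsConvexBlock f g ∧ alphaQ g = 0

/-- The Grothendieck property: every weak* null sequence in the dual is weakly null. -/
def Grothendieck : Prop :=
  ∀ f : ℕ → X →L[ℝ] ℝ, WeakStarNull X f →
    ∀ Φ : (X →L[ℝ] ℝ) →L[ℝ] ℝ, Tendsto (fun n => Φ (f n)) atTop (𝓝 0)

def GQ : ℝ :=
  sSup { r | ∃ f : ℕ → X →L[ℝ] ℝ, (∀ n, ‖f n‖ ≤ 1) ∧ WeakStarNull X f ∧
    r = sInf { s | ∃ g, IsConvexBlock f g ∧ s = limsup (fun n => ‖g n‖) atTop } }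

def RQ : ℝ :=
  sSup { r | ∃ x : ℕ → X, (∀ n, x n ∈ closedBall (0 : X) 1) ∧
    r = sInf { s | ∃ z, IsConvexBlock x z ∧ s = caSeq z } }

/-- weak* cluster points in the bidual of a sequence in the bidual. -/
def WStarClusterPts (u : ℕ → (X →L[ℝ] ℝ) →L[ℝ] ℝ) : Set ((X →L[ℝ] ℝ) →L[ℝ] ℝ) :=
  { z | MapClusterPt (StrongDual.toWeakDual (𝕜 := ℝ) z) atTop
      (fun n => StrongDual.toWeakDual (𝕜 := ℝ) (u n)) }

def wckQ (A : Set X) : ℝ :=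
  sSup { r | ∃ x : ℕ → X, (∀ n, x n ∈ A) ∧
    r = sInf { s | ∃ z ∈ WStarClusterPts X (fun n => inclusionInDoubleDual ℝ X (x n)),
      ∃ v : X, s = ‖z - inclusionInDoubleDual ℝ X v‖ } }

/-!
(K) ⇒ K₁ = 0 is immediate because α ≥ 0. Conversely, a weak* null sequence is bounded by
Banach–Steinhaus, so after rescaling it and all its convex block subsequences lie in the unit ball,
and K₁ = 0 yields successive convex block subsequences z₀, z₁, … with α(z_m) < 1/(m+1). The
diagonal sequence is again a convex block subsequence, and for n > m its n-th term is a convex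
combination of terms z_m(j) with j ≥ n. Functionals bounded by r on a weakly compact K form a
convex set, so the diagonal inherits the eventual bound α(z_m) of every z_m on K: it is Mackey null.
-/

section ConvexBlock

variable {E F : Type*} [AddCommGroup E] [Module ℝ E] [AddCommGroup F] [Module ℝ F]

def IsConvexBlockWith (k : ℕ → ℕ) (x y : ℕ → E) : Prop :=
  k 0 = 0 ∧ StrictMono k ∧ ∀ n, y n ∈ convexHull ℝ (x '' Ico (k n) (k (n + 1)))

theorem IsConvexBlockWith.id (x : ℕ → E) : IsConvexBlockWith id x x :=
  ⟨rfl, strictMono_id, fun n => subset_convexHull ℝ _ ⟨n, ⟨le_rfl, n.lt_succ_self⟩, rfl⟩⟩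

theorem IsConvexBlockWith.comp {x y z : ℕ → E} {k l : ℕ → ℕ} (hxy : IsConvexBlockWith k x y)
    (hyz : IsConvexBlockWith l y z) : IsConvexBlockWith (k ∘ l) x z := by
  obtain ⟨hk0, hk, hy⟩ := hxy
  obtain ⟨hl0, hl, hz⟩ := hyz
  refine ⟨by simp [hl0, hk0], hk.comp hl,
    fun n => convexHull_min ?_ (convex_convexHull ℝ _) (hz n)⟩
  rintro _ ⟨j, hj, rfl⟩
  exact convexHull_mono (image_mono (Ico_subset_Ico (hk.monotone hj.1)
    (hk.monotone (Nat.succ_le_of_lt hj.2)))) (hy j)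

theorem IsConvexBlockWith.isConvexBlock {k : ℕ → ℕ} {x y : ℕ → E}
    (h : IsConvexBlockWith k x y) : IsConvexBlock x y :=
  ⟨k, h⟩

theorem IsConvexBlock.refl (x : ℕ → E) : IsConvexBlock x x :=
  (IsConvexBlockWith.id x).isConvexBlock

theorem IsConvexBlock.trans {x y z : ℕ → E} (hxy : IsConvexBlock x y)
    (hyz : IsConvexBlock y z) : IsConvexBlock x z :=
  let ⟨_, hk⟩ := hxy; let ⟨_, hl⟩ := hyz; (IsConvexBlockWith.comp hk hl).isConvexBlock

theorem IsConvexBlock.mem_convexHull_tail {x y : ℕ → E} (h : IsConvexBlock x y) (n : ℕ) :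
    y n ∈ convexHull ℝ (x '' Ici n) := by
  obtain ⟨k, -, hk, hy⟩ := h
  exact convexHull_mono (image_mono fun j hj => hk.le_apply.trans hj.1) (hy n)

theorem IsConvexBlock.forall_mem {x y : ℕ → E} (h : IsConvexBlock x y) {S : Set E}
    (hS : Convex ℝ S) (hx : ∀ n, x n ∈ S) (n : ℕ) : y n ∈ S :=
  convexHull_min (image_subset_iff.2 fun j _ => hx j) hS (h.mem_convexHull_tail n)

theorem IsConvexBlock.map {x y : ℕ → E} (h : IsConvexBlock x y) (L : E →ₗ[ℝ] F) :
    IsConvexBlock (L ∘ x) (L ∘ y) := by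
  obtain ⟨k, hk0, hk, hy⟩ := h
  refine ⟨k, hk0, hk, fun n => ?_⟩
  rw [image_comp, ← L.image_convexHull]
  exact mem_image_of_mem L (hy n)

theorem IsConvexBlockWith.diagonal {x : ℕ → E} {y : ℕ → ℕ → E} {k : ℕ → ℕ → ℕ}
    (hy : ∀ m, IsConvexBlockWith (k m) x (y m)) (hk : ∀ m j, k m j ≤ k (m + 1) j) :
    IsConvexBlockWith (fun n => k n n) x (fun n => y n n) := by
  refine ⟨(hy 0).1, strictMono_nat_of_lt_succ fun n => ?_, fun n => ?_⟩
  · exact ((hy n).2.1 n.lt_succ_self).trans_le (hk n (n + 1))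
  · exact convexHull_mono (image_mono (Ico_subset_Ico le_rfl (hk n (n + 1)))) ((hy n).2.2 n)

theorem Convex.eventually_mem_of_mem_convexHull_tail {S : Set E} (hS : Convex ℝ S)
    {z h : ℕ → E} (hz : ∀ᶠ j in atTop, z j ∈ S)
    (hh : ∀ᶠ n in atTop, h n ∈ convexHull ℝ (z '' Ici n)) : ∀ᶠ n in atTop, h n ∈ S := by
  obtain ⟨N, hN⟩ := eventually_atTop.1 hz
  filter_upwards [hh, eventually_ge_atTop N] with n hn hNn
  exact convexHull_min (image_subset_iff.2 fun j hj => hN j (hNn.trans hj)) hS hn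

theorem IsConvexBlock.exists_diagonal {x : ℕ → E} {P : ℕ → (ℕ → E) → Prop}
    (hP : ∀ m y, IsConvexBlock x y → ∃ z, IsConvexBlock y z ∧ P m z) :
    ∃ h, IsConvexBlock x h ∧ ∀ m, ∃ z, IsConvexBlock x z ∧ P m z ∧
      ∀ᶠ n in atTop, h n ∈ convexHull ℝ (z '' Ici n) := by
  -- index witnesses are carried along so that the diagonal is again a convex block subsequence
  let Block := {p : (ℕ → E) × (ℕ → ℕ) // IsConvexBlockWith p.2 x p.1}
  have step : ∀ m (p : Block), ∃ z l, IsConvexBlockWith l p.1.1 z ∧ P m z := fun m p => by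
    obtain ⟨z, ⟨l, hl⟩, hz⟩ := hP m p.1.1 p.2.isConvexBlock
    exact ⟨z, l, hl, hz⟩
  choose Z L hZL hPZ using step
  let seq : ℕ → Block := fun m => Nat.rec ⟨(x, id), IsConvexBlockWith.id x⟩
    (fun m p => ⟨(Z m p, p.1.2 ∘ L m p), p.2.comp (hZL m p)⟩) m
  have chain : ∀ m n, m ≤ n → IsConvexBlock (seq m).1.1 (seq n).1.1 := by
    intro m n hmn
    induction n, hmn using Nat.le_induction with
    | base => exact IsConvexBlock.refl _
    | succ n _ ih => exact ih.trans (hZL n (seq n)).isConvexBlock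
  refine ⟨fun n => (seq (n + 1)).1.1 n,
    (IsConvexBlockWith.diagonal (fun m => (seq (m + 1)).2) fun m j => ?_).isConvexBlock,
    fun m => ⟨_, (seq (m + 1)).2.isConvexBlock, hPZ m (seq m), ?_⟩⟩
  · exact (seq (m + 1)).2.2.1.monotone (hZL (m + 1) (seq (m + 1))).2.1.le_apply
  · filter_upwards [eventually_gt_atTop m] with n hn
    exact (chain (m + 1) (n + 1) (by omega)).mem_convexHull_tail n

end ConvexBlock

section Normed

variable {F : Type*} [NormedAddCommGroup F] [NormedSpace ℝ F]

theorem IsConvexBlock.norm_le {x y : ℕ → F} (h : IsConvexBlock x y) {C : ℝ}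
    (hx : ∀ n, ‖x n‖ ≤ C) (n : ℕ) : ‖y n‖ ≤ C :=
  mem_closedBall_zero_iff.1 <|
    h.forall_mem (convex_closedBall 0 C) (fun n => mem_closedBall_zero_iff.2 (hx n)) n

theorem IsConvexBlock.tendsto {x y : ℕ → F} {a : F} (h : IsConvexBlock x y)
    (hx : Tendsto x atTop (𝓝 a)) : Tendsto y atTop (𝓝 a) := by
  rw [Metric.tendsto_nhds] at hx ⊢
  exact fun ε hε => (convex_ball a ε).eventually_mem_of_mem_convexHull_tail (hx ε hε)
    (Eventually.of_forall h.mem_convexHull_tail)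

end Normed

section Dual

variable {X : Type*} [NormedAddCommGroup X] [NormedSpace ℝ X]

theorem WeakStarNull.of_isConvexBlock {f g : ℕ → X →L[ℝ] ℝ} (hf : WeakStarNull X f)
    (h : IsConvexBlock f g) : WeakStarNull X g := fun x =>
  (h.map (ContinuousLinearMap.apply ℝ ℝ x : (X →L[ℝ] ℝ) →ₗ[ℝ] ℝ)).tendsto (hf x)

theorem WeakStarNull.exists_norm_le [CompleteSpace X] {f : ℕ → X →L[ℝ] ℝ}
    (hf : WeakStarNull X f) : ∃ C, ∀ n, ‖f n‖ ≤ C :=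
  banach_steinhaus fun x =>
    let ⟨C, hC⟩ := (hf x).norm.bddAbove_range
    ⟨C, fun n => hC (mem_range_self n)⟩

theorem convex_setOf_forall_abs_apply_le (K : Set X) (r : ℝ) :
    Convex ℝ {φ : X →L[ℝ] ℝ | ∀ x ∈ K, |φ x| ≤ r} := by
  intro φ hφ ψ hψ a b ha hb hab x hx
  calc |(a • φ + b • ψ) x| ≤ a * |φ x| + b * |ψ x| := by
        simpa [abs_mul, abs_of_nonneg ha, abs_of_nonneg hb] using abs_add_le (a * φ x) (b * ψ x)
    _ ≤ a * r + b * r := by gcongr; exacts [hφ x hx, hψ x hx]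
    _ = r := by rw [← add_mul, hab, one_mul]

theorem abs_apply_le_of_norm_le {φ : X →L[ℝ] ℝ} {C : ℝ} (hφ : ‖φ‖ ≤ C) {x : X}
    (hx : x ∈ closedBall 0 1) : |φ x| ≤ C := by
  simpa using φ.le_of_opNorm_le_of_le hφ (mem_closedBall_zero_iff.1 hx)

theorem alphaQ_nonneg (f : ℕ → X →L[ℝ] ℝ) : 0 ≤ alphaQ f :=
  Real.sSup_nonneg' ⟨0, ⟨∅, empty_subset _, by simp [WeaklyCompact], by simp⟩, le_rfl⟩

theorem isCoboundedUnder_sSup_abs_apply (f : ℕ → X →L[ℝ] ℝ) (K : Set X) :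
    IsCoboundedUnder (· ≤ ·) atTop fun n => sSup ((fun x => |f n x|) '' K) :=
  isCoboundedUnder_le_of_le atTop fun _ =>
    Real.sSup_nonneg (forall_mem_image.2 fun _ _ => abs_nonneg _)

theorem sSup_abs_apply_le {φ : X →L[ℝ] ℝ} {C : ℝ} (hφ : ‖φ‖ ≤ C) {K : Set X}
    (hK : K ⊆ closedBall 0 1) : sSup ((fun x => |φ x|) '' K) ≤ C :=
  Real.sSup_le (forall_mem_image.2 fun _ hx => abs_apply_le_of_norm_le hφ (hK hx))
    ((norm_nonneg φ).trans hφ)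

theorem limsup_sSup_abs_apply_le {f : ℕ → X →L[ℝ] ℝ} {C : ℝ} (hf : ∀ n, ‖f n‖ ≤ C)
    {K : Set X} (hK : K ⊆ closedBall 0 1) :
    limsup (fun n => sSup ((fun x => |f n x|) '' K)) atTop ≤ C :=
  limsup_le_of_le (isCoboundedUnder_sSup_abs_apply f K)
    (Eventually.of_forall fun n => sSup_abs_apply_le (hf n) hK)

theorem alphaQ_le {f : ℕ → X →L[ℝ] ℝ} {C : ℝ} (hf : ∀ n, ‖f n‖ ≤ C) : alphaQ f ≤ C :=
  Real.sSup_le (by rintro _ ⟨K, hK, -, rfl⟩; exact limsup_sSup_abs_apply_le hf hK)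
    ((norm_nonneg _).trans (hf 0))

theorem limsup_sSup_abs_apply_le_alphaQ {f : ℕ → X →L[ℝ] ℝ} {C : ℝ} (hf : ∀ n, ‖f n‖ ≤ C)
    {K : Set X} (hK : K ⊆ closedBall 0 1) (hKw : WeaklyCompact X K) :
    limsup (fun n => sSup ((fun x => |f n x|) '' K)) atTop ≤ alphaQ f :=
  le_csSup ⟨C, by rintro _ ⟨K', hK', -, rfl⟩; exact limsup_sSup_abs_apply_le hf hK'⟩
    ⟨K, hK, hKw, rfl⟩

theorem eventually_abs_apply_le_of_alphaQ_lt {f : ℕ → X →L[ℝ] ℝ} {C r : ℝ}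
    (hf : ∀ n, ‖f n‖ ≤ C) {K : Set X} (hK : K ⊆ closedBall 0 1) (hKw : WeaklyCompact X K)
    (hr : alphaQ f < r) : ∀ᶠ n in atTop, ∀ x ∈ K, |f n x| ≤ r := by
  have hlim := eventually_lt_of_limsup_lt
    ((limsup_sSup_abs_apply_le_alphaQ hf hK hKw).trans_lt hr)
    (isBoundedUnder_of ⟨C, fun n => sSup_abs_apply_le (hf n) hK⟩)
  filter_upwards [hlim] with n hn x hx
  refine (le_csSup ⟨C, ?_⟩ (mem_image_of_mem _ hx)).trans hn.le
  exact forall_mem_image.2 fun _ hy => abs_apply_le_of_norm_le (hf n) (hK hy)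

theorem alphaQ_eq_zero_of_eventually_abs_apply_le {f : ℕ → X →L[ℝ] ℝ}
    (hf : ∀ K ⊆ closedBall (0 : X) 1, WeaklyCompact X K →
      ∀ ε > 0, ∀ᶠ n in atTop, ∀ x ∈ K, |f n x| ≤ ε) :
    alphaQ f = 0 := by
  refine le_antisymm (Real.sSup_nonpos ?_) (alphaQ_nonneg f)
  rintro _ ⟨K, hK, hKw, rfl⟩
  refine le_of_forall_pos_le_add fun ε hε =>
    limsup_le_of_le (isCoboundedUnder_sSup_abs_apply f K) ?_
  filter_upwards [hf K hK hKw ε hε] with n hn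
  rw [zero_add]
  exact Real.sSup_le (forall_mem_image.2 hn) hε.le

theorem bddBelow_alphaQ_isConvexBlock (f : ℕ → X →L[ℝ] ℝ) :
    BddBelow {s | ∃ g, IsConvexBlock f g ∧ s = alphaQ g} :=
  ⟨0, by rintro _ ⟨g, -, rfl⟩; exact alphaQ_nonneg g⟩

theorem sInf_alphaQ_isConvexBlock_le_K1 {f : ℕ → X →L[ℝ] ℝ} (hf1 : ∀ n, ‖f n‖ ≤ 1)
    (hf : WeakStarNull X f) : sInf {s | ∃ g, IsConvexBlock f g ∧ s = alphaQ g} ≤ K1 X := by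
  refine le_csSup ⟨1, ?_⟩ ⟨f, hf1, hf, rfl⟩
  rintro _ ⟨f', hf'1, -, rfl⟩
  exact (csInf_le (bddBelow_alphaQ_isConvexBlock f') ⟨f', .refl f', rfl⟩).trans (alphaQ_le hf'1)

theorem K1_eq_zero_of_propertyK (h : PropertyK X) : K1 X = 0 := by
  have hinf : ∀ f, WeakStarNull X f →
      sInf {s | ∃ g, IsConvexBlock f g ∧ s = alphaQ g} = 0 := by
    intro f hf
    obtain ⟨g, hg, hg0⟩ := h f hf
    refine le_antisymm (csInf_le (bddBelow_alphaQ_isConvexBlock f) ⟨g, hg, hg0.symm⟩) ?_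
    exact le_csInf ⟨_, g, hg, rfl⟩ (by rintro _ ⟨g', -, rfl⟩; exact alphaQ_nonneg g')
  have hzero : WeakStarNull X (0 : ℕ → X →L[ℝ] ℝ) := fun _ => tendsto_const_nhds
  suffices {r | ∃ f : ℕ → X →L[ℝ] ℝ, (∀ n, ‖f n‖ ≤ 1) ∧ WeakStarNull X f ∧
      r = sInf {s | ∃ g, IsConvexBlock f g ∧ s = alphaQ g}} = {0} by
    rw [K1, this, csSup_singleton]
  ext r
  refine ⟨fun ⟨f, _, hf, hr⟩ => hr.trans (hinf f hf), fun hr => ⟨0, fun _ => ?_, hzero, ?_⟩⟩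
  · simp
  · rw [hr, hinf 0 hzero]

theorem exists_isConvexBlock_alphaQ_lt_of_K1_eq_zero (hK1 : K1 X = 0)
    {f : ℕ → X →L[ℝ] ℝ} (hf1 : ∀ n, ‖f n‖ ≤ 1) (hf : WeakStarNull X f) {ε : ℝ} (hε : 0 < ε) :
    ∃ g, IsConvexBlock f g ∧ alphaQ g < ε := by
  have hlt : sInf {s | ∃ g, IsConvexBlock f g ∧ s = alphaQ g} < ε :=
    (sInf_alphaQ_isConvexBlock_le_K1 hf1 hf).trans_lt (hK1 ▸ hε)
  have hne : {s | ∃ g, IsConvexBlock f g ∧ s = alphaQ g}.Nonempty := ⟨_, f, .refl f, rfl⟩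
  obtain ⟨_, ⟨g, hg, rfl⟩, hgε⟩ := exists_lt_of_csInf_lt hne hlt
  exact ⟨g, hg, hgε⟩

end Dual

theorem propertyK_of_K1_eq_zero {X : Type*} [NormedAddCommGroup X] [NormedSpace ℝ X]
    [CompleteSpace X] (hK1 : K1 X = 0) : PropertyK X := by
  intro f hf
  obtain ⟨C, hC⟩ := hf.exists_norm_le
  set c := max C 1
  have hc : 0 < c := zero_lt_one.trans_le (le_max_right _ _)
  set f' : ℕ → X →L[ℝ] ℝ := fun n => c⁻¹ • f n
  have hf'1 : ∀ n, ‖f' n‖ ≤ 1 := fun n => by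
    rw [norm_smul, Real.norm_of_nonneg (inv_nonneg.2 hc.le), inv_mul_le_iff₀ hc, mul_one]
    exact (hC n).trans (le_max_left _ _)
  have hf' : WeakStarNull X f' := fun x => by simpa [f'] using (hf x).const_mul c⁻¹
  obtain ⟨h, hh, hdiag⟩ := IsConvexBlock.exists_diagonal (x := f')
    (P := fun m z => alphaQ z < 1 / ((m : ℝ) + 1)) fun m y hy =>
      exists_isConvexBlock_alphaQ_lt_of_K1_eq_zero hK1 (hy.norm_le hf'1)
        (hf'.of_isConvexBlock hy) Nat.one_div_pos_of_nat
  refine ⟨fun n => c • h n, ?_,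
    alphaQ_eq_zero_of_eventually_abs_apply_le fun K hK hKw ε hε => ?_⟩
  · simpa [Function.comp_def, f', smul_smul, hc.ne'] using hh.map (LinearMap.lsmul ℝ _ c)
  · obtain ⟨m, hm⟩ := exists_nat_one_div_lt (div_pos hε hc)
    obtain ⟨z, hz, hzα, hzh⟩ := hdiag m
    have hzK := eventually_abs_apply_le_of_alphaQ_lt (hz.norm_le hf'1) hK hKw (hzα.trans hm)
    filter_upwards [(convex_setOf_forall_abs_apply_le K _).eventually_mem_of_mem_convexHull_tail
      hzK hzh] with n hn x hx
    rw [smul_apply, smul_eq_mul, abs_mul, abs_of_pos hc]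
    exact (le_div_iff₀' hc).1 (hn x hx)

theorem stmt5 {X : Type*} [NormedAddCommGroup X] [NormedSpace ℝ X] [CompleteSpace X] :
    PropertyK X ↔ K1 X = 0 :=
  ⟨K1_eq_zero_of_propertyK, propertyK_of_K1_eq_zero⟩
end
end

section
/- For any Banach space X, K₂(X) ≤ K₁(X) ≤ 2K₂(X), where K₁(X) = sup over weak* null sequences (f_n) in B_{X*} of inf over convex block subsequences (g_n) of α((g_n)), and K₂(X) is defined analogously with β in place of α. -/
open Filter Topology Metric Set NormedSpace

noncomputable section

variable (X : Type*) [NormedAddCommGroup X] [NormedSpace ℝ X]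

variable {X}

variable (X)

/-!
`β ≤ α` because a weakly null sequence together with `0` is weakly compact. For `α ≤ 2β` fix a
weakly compact `K` in the unit ball and points `x_n ∈ K` almost norming `g_n` on `K`. By the
Eberlein–Šmulian theorem a subsequence of `(x_n)` converges weakly to some `a ∈ K`, so
`(x_n - a) / 2`, extended by `0` off the subsequence, is weakly null in the unit ball; as `(g_n)`
is weak* null, `|g_n ((x_n - a) / 2)|` is eventually close to `|g_n x_n| / 2`. Both inequalities
pass to `K₁`, `K₂` since convex block subsequences of a weak* null sequence in the dual unit ball
are again such.

Eberlein–Šmulian: the closed span of `(x_n)` is separable, hence separated by countably many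
functionals `F_k`; a diagonal subsequence makes every `F_k (x_n)` converge, and this pins down the
weak cluster point of the subsequence, which is then its weak limit.
-/

theorem csSup_csInf_le_mul {ι κ : Type*} {S : Set ι} {T : ι → Set κ} {u v : κ → ℝ} {c : ℝ}
    (hc : 0 < c) (hS : S.Nonempty) (hT : ∀ i ∈ S, (T i).Nonempty)
    (hu : ∀ i ∈ S, ∀ j ∈ T i, 0 ≤ u j) (hv : ∀ i ∈ S, ∀ j ∈ T i, v j ∈ Icc 0 1)
    (huv : ∀ i ∈ S, ∀ j ∈ T i, u j ≤ c * v j) :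
    sSup {r | ∃ i ∈ S, r = sInf {s | ∃ j ∈ T i, s = u j}} ≤
      c * sSup {r | ∃ i ∈ S, r = sInf {s | ∃ j ∈ T i, s = v j}} := by
  have hu_bdd : ∀ i ∈ S, BddBelow {s | ∃ j ∈ T i, s = u j} := fun i hi =>
    ⟨0, by rintro - ⟨j, hj, rfl⟩; exact hu i hi j hj⟩
  have hv_bdd : ∀ i ∈ S, BddBelow {s | ∃ j ∈ T i, s = v j} := fun i hi =>
    ⟨0, by rintro - ⟨j, hj, rfl⟩; exact (hv i hi j hj).1⟩
  have hsup_bdd : BddAbove {r | ∃ i ∈ S, r = sInf {s | ∃ j ∈ T i, s = v j}} := by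
    refine ⟨1, ?_⟩
    rintro - ⟨i, hi, rfl⟩
    obtain ⟨j, hj⟩ := hT i hi
    exact (csInf_le (hv_bdd i hi) ⟨j, hj, rfl⟩).trans (hv i hi j hj).2
  obtain ⟨i₀, hi₀⟩ := hS
  refine csSup_le ⟨_, i₀, hi₀, rfl⟩ ?_
  rintro - ⟨i, hi, rfl⟩
  have hinf : sInf {s | ∃ j ∈ T i, s = u j} / c ≤ sInf {s | ∃ j ∈ T i, s = v j} := by
    obtain ⟨j₀, hj₀⟩ := hT i hi
    refine le_csInf ⟨_, j₀, hj₀, rfl⟩ ?_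
    rintro - ⟨j, hj, rfl⟩
    rw [div_le_iff₀' hc]
    exact (csInf_le (hu_bdd i hi) ⟨j, hj, rfl⟩).trans (huv i hi j hj)
  rw [div_le_iff₀' hc] at hinf
  exact hinf.trans (mul_le_mul_of_nonneg_left (le_csSup hsup_bdd ⟨i, hi, rfl⟩) hc.le)

theorem MapClusterPt.eq_of_tendsto {X α : Type*} [TopologicalSpace X] [T2Space X] {l : Filter α}
    {u : α → X} {x y : X} (h : MapClusterPt x l u) (hu : Tendsto u l (𝓝 y)) : x = y :=
  eq_of_nhds_neBot (h.clusterPt.neBot.mono (inf_le_inf_left _ hu))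

theorem Filter.Tendsto.extend_zero_of_strictMono {α : Type*} [TopologicalSpace α] [Zero α]
    {u : ℕ → α} (hu : Tendsto u atTop (𝓝 0)) {θ : ℕ → ℕ} (hθ : StrictMono θ) :
    Tendsto (Function.extend θ u 0) atTop (𝓝 0) := by
  rw [tendsto_atTop'] at hu ⊢
  intro s hs
  obtain ⟨N, hN⟩ := hu s hs
  refine ⟨θ N, fun n hn => ?_⟩
  by_cases h : ∃ i, θ i = n
  · obtain ⟨i, rfl⟩ := h
    rw [hθ.injective.extend_apply]
    exact hN i (hθ.le_iff_le.1 hn)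
  · rw [Function.extend_apply' _ _ _ h]
    exact mem_of_mem_nhds hs

namespace IsConvexBlock

section AddCommGroup

variable {E F : Type*} [AddCommGroup E] [Module ℝ E] [AddCommGroup F] [Module ℝ F]

theorem refl_s6 (x : ℕ → E) : IsConvexBlock x x :=
  ⟨id, rfl, strictMono_id, fun n => subset_convexHull ℝ _ ⟨n, by simp, rfl⟩⟩

theorem mem_of_forall_le {x y : ℕ → E} (h : IsConvexBlock x y) {s : Set E} (hs : Convex ℝ s)
    {n : ℕ} (hx : ∀ m, n ≤ m → x m ∈ s) : y n ∈ s := by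
  obtain ⟨k, -, hk, hy⟩ := h
  refine convexHull_min ?_ hs (hy n)
  rintro - ⟨m, hm, rfl⟩
  exact hx m ((hk.id_le n).trans hm.1)

theorem map_s6 {x y : ℕ → E} (h : IsConvexBlock x y) (L : E →ₗ[ℝ] F) :
    IsConvexBlock (L ∘ x) (L ∘ y) := by
  obtain ⟨k, hk0, hk, hy⟩ := h
  refine ⟨k, hk0, hk, fun n => ?_⟩
  rw [Set.image_comp, ← L.image_convexHull]
  exact Set.mem_image_of_mem L (hy n)

end AddCommGroup

section Seminormed

variable {E : Type*} [SeminormedAddCommGroup E] [NormedSpace ℝ E]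

theorem norm_le_s6 {x y : ℕ → E} (h : IsConvexBlock x y) {C : ℝ} (hx : ∀ n, ‖x n‖ ≤ C) (n : ℕ) :
    ‖y n‖ ≤ C := by
  simpa using h.mem_of_forall_le (convex_closedBall 0 C) (n := n) fun m _ => by simpa using hx m

theorem tendsto_s6 {x y : ℕ → E} (h : IsConvexBlock x y) {a : E}
    (hx : Tendsto x atTop (𝓝 a)) : Tendsto y atTop (𝓝 a) := by
  rw [Metric.nhds_basis_closedBall.tendsto_right_iff] at hx ⊢
  intro ε hε
  obtain ⟨N, hN⟩ := eventually_atTop.1 (hx ε hε)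
  exact eventually_atTop.2 ⟨N, fun n hn =>
    h.mem_of_forall_le (convex_closedBall a ε) fun m hm => hN m (hn.trans hm)⟩

end Seminormed

theorem weakStarNull {E : Type*} [NormedAddCommGroup E] [NormedSpace ℝ E]
    {f g : ℕ → StrongDual ℝ E} (h : IsConvexBlock f g) (hf : WeakStarNull E f) :
    WeakStarNull E g := fun z =>
  (h.map_s6 (ContinuousLinearMap.apply ℝ ℝ z).toLinearMap).tendsto_s6 (hf z)

end IsConvexBlock

section NormedSpace

variable {E : Type*} [NormedAddCommGroup E] [NormedSpace ℝ E] {g : ℕ → StrongDual ℝ E}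

theorem abs_apply_le_one {f : StrongDual ℝ E} (hf : ‖f‖ ≤ 1) {x : E}
    (hx : x ∈ closedBall (0 : E) 1) : |f x| ≤ 1 := by
  simpa using (f.le_opNorm x).trans (mul_le_one₀ hf (norm_nonneg x) (mem_closedBall_zero_iff.1 hx))

theorem sSup_abs_image_nonneg (f : StrongDual ℝ E) (K : Set E) :
    0 ≤ sSup ((fun x => |f x|) '' K) :=
  Real.sSup_nonneg fun _ ⟨_, _, ht⟩ => ht ▸ abs_nonneg _

theorem sSup_abs_image_le_one {f : StrongDual ℝ E} (hf : ‖f‖ ≤ 1) {K : Set E}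
    (hK : K ⊆ closedBall 0 1) : sSup ((fun x => |f x|) '' K) ≤ 1 :=
  Real.sSup_le (fun _ ⟨_, hx, ht⟩ => ht ▸ abs_apply_le_one hf (hK hx)) zero_le_one

theorem limsup_sSup_abs_image_le_one (hg : ∀ n, ‖g n‖ ≤ 1) {K : Set E}
    (hK : K ⊆ closedBall 0 1) : limsup (fun n => sSup ((fun x => |g n x|) '' K)) atTop ≤ 1 :=
  limsup_le_of_le (isCoboundedUnder_le_of_le atTop fun n => sSup_abs_image_nonneg (g n) K)
    (.of_forall fun n => sSup_abs_image_le_one (hg n) hK)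

theorem limsup_abs_apply_le_one (hg : ∀ n, ‖g n‖ ≤ 1) {x : ℕ → E}
    (hx : ∀ n, x n ∈ closedBall (0 : E) 1) : limsup (fun n => |g n (x n)|) atTop ≤ 1 :=
  limsup_le_of_le (isCoboundedUnder_le_of_le atTop fun _ => abs_nonneg _)
    (.of_forall fun n => abs_apply_le_one (hg n) (hx n))

theorem weaklyCompact_empty : WeaklyCompact E ∅ := by
  simp [WeaklyCompact]

theorem le_alphaQ (hg : ∀ n, ‖g n‖ ≤ 1) {K : Set E} (hK : K ⊆ closedBall 0 1)
    (hKc : WeaklyCompact E K) : limsup (fun n => sSup ((fun x => |g n x|) '' K)) atTop ≤ alphaQ g :=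
  le_csSup ⟨1, by rintro - ⟨K', hK', -, rfl⟩; exact limsup_sSup_abs_image_le_one hg hK'⟩
    ⟨K, hK, hKc, rfl⟩

theorem alphaQ_le_s6 {c : ℝ} (h : ∀ K ⊆ closedBall (0 : E) 1, WeaklyCompact E K →
      limsup (fun n => sSup ((fun x => |g n x|) '' K)) atTop ≤ c) : alphaQ g ≤ c :=
  csSup_le ⟨_, ∅, empty_subset _, weaklyCompact_empty, rfl⟩ fun _ ⟨K, hK, hKc, hr⟩ =>
    hr ▸ h K hK hKc

theorem alphaQ_nonneg_s6 (hg : ∀ n, ‖g n‖ ≤ 1) : 0 ≤ alphaQ g := by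
  simpa using le_alphaQ hg (empty_subset _) weaklyCompact_empty

theorem alphaQ_le_one (hg : ∀ n, ‖g n‖ ≤ 1) : alphaQ g ≤ 1 :=
  alphaQ_le_s6 fun _ hK _ => limsup_sSup_abs_image_le_one hg hK

theorem le_betaQ (hg : ∀ n, ‖g n‖ ≤ 1) {x : ℕ → E} (hx : ∀ n, x n ∈ closedBall (0 : E) 1)
    (hx0 : WeaklyNull E x) : limsup (fun n => |g n (x n)|) atTop ≤ betaQ g :=
  le_csSup ⟨1, by rintro - ⟨x', hx', -, rfl⟩; exact limsup_abs_apply_le_one hg hx'⟩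
    ⟨x, hx, hx0, rfl⟩

theorem betaQ_le {c : ℝ} (h : ∀ x : ℕ → E, (∀ n, x n ∈ closedBall (0 : E) 1) → WeaklyNull E x →
      limsup (fun n => |g n (x n)|) atTop ≤ c) : betaQ g ≤ c :=
  csSup_le ⟨_, 0, fun _ => by simp, fun _ => by simp, rfl⟩
    fun _ ⟨x, hx, hx0, hr⟩ => hr ▸ h x hx hx0

theorem betaQ_nonneg (hg : ∀ n, ‖g n‖ ≤ 1) : 0 ≤ betaQ g := by
  simpa using le_betaQ hg (x := 0) (fun _ => by simp) fun _ => by simp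

theorem betaQ_le_one (hg : ∀ n, ‖g n‖ ≤ 1) : betaQ g ≤ 1 :=
  betaQ_le fun _ hx _ => limsup_abs_apply_le_one hg hx

theorem continuous_dual_toWeakSpace_symm (f : StrongDual ℝ E) :
    Continuous fun w : WeakSpace ℝ E => f ((toWeakSpace ℝ E).symm w) := by
  exact WeakBilin.eval_continuous (topDualPairing ℝ E).flip f

theorem tendsto_toWeakSpace_iff {α : Type*} {l : Filter α} {u : α → E} {a : E} :
    Tendsto (fun i => toWeakSpace ℝ E (u i)) l (𝓝 (toWeakSpace ℝ E a)) ↔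
      ∀ f : StrongDual ℝ E, Tendsto (fun i => f (u i)) l (𝓝 (f a)) :=
  WeakBilin.tendsto_iff_forall_eval_tendsto _ fun _ _ h =>
    SeparatingDual.eq_iff_forall_dual_eq.2 fun f => LinearMap.congr_fun h f

theorem MapClusterPt.dual_apply {α : Type*} {l : Filter α} {u : α → E} {a : E}
    (h : MapClusterPt (toWeakSpace ℝ E a) l fun i => toWeakSpace ℝ E (u i))
    (f : StrongDual ℝ E) : MapClusterPt (f a) l fun i => f (u i) :=
  MapClusterPt.continuousAt_comp (X := WeakSpace ℝ E)
    (continuous_dual_toWeakSpace_symm f).continuousAt h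

theorem Convex.isClosed_image_toWeakSpace {s : Set E} (hs : Convex ℝ s) (hsc : IsClosed s) :
    IsClosed (toWeakSpace ℝ E '' s) := by
  rw [← hsc.closure_eq, hs.toWeakSpace_closure ℝ]
  exact isClosed_closure

theorem WeaklyCompact.isCompact_image_dual {K : Set E} (hK : WeaklyCompact E K)
    (f : StrongDual ℝ E) : IsCompact (f '' K) := by
  simpa [Set.image_image] using hK.image (continuous_dual_toWeakSpace_symm f)

theorem WeaklyNull.weaklyCompact_insert_zero_range {x : ℕ → E} (hx : WeaklyNull E x) :
    WeaklyCompact E (insert 0 (range x)) := by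
  have : Tendsto (fun n => toWeakSpace ℝ E (x n)) atTop (𝓝 (toWeakSpace ℝ E 0)) :=
    tendsto_toWeakSpace_iff.2 fun f => by simpa using hx f
  rw [WeaklyCompact, Set.image_insert_eq, ← Set.range_comp]
  exact this.isCompact_insert_range

theorem TopologicalSpace.IsSeparable.exists_dual_seq_separating {s : Set E} (hs : IsSeparable s) :
    ∃ F : ℕ → StrongDual ℝ E, ∀ z ∈ s, (∀ k, F k z = 0) → z = 0 := by
  obtain ⟨c, hc, hsc⟩ := hs
  obtain ⟨y, hy⟩ := (hc.insert 0).exists_eq_range (insert_nonempty 0 c)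
  choose F hF hFy using fun k => exists_dual_vector'' ℝ (y k)
  refine ⟨F, fun z hz hFz => ?_⟩
  by_contra hz0
  have hzc : z ∈ closure (range y) := hy ▸ closure_mono (subset_insert 0 c) (hsc hz)
  obtain ⟨k, hk⟩ := Metric.mem_closure_range_iff.1 hzc (‖z‖ / 2) (by positivity)
  -- `F k` kills `z` and norms `y k`, so `‖z‖ ≤ ‖z - y k‖ + ‖y k‖ ≤ 2 ‖z - y k‖ < ‖z‖`.
  have hyk : ‖y k‖ ≤ ‖z - y k‖ := by
    calc ‖y k‖ = ‖F k (z - y k)‖ := by simp [hFz k, hFy k]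
      _ ≤ ‖F k‖ * ‖z - y k‖ := (F k).le_opNorm _
      _ ≤ ‖z - y k‖ := mul_le_of_le_one_left (norm_nonneg _) (hF k)
  rw [dist_eq_norm] at hk
  linarith [norm_le_norm_sub_add z (y k), norm_pos_iff.2 hz0]

/-- The sequential half of the Eberlein–Šmulian theorem. -/
theorem WeaklyCompact.exists_subseq_tendsto {K : Set E} (hK : WeaklyCompact E K) {x : ℕ → E}
    (hx : ∀ n, x n ∈ K) :
    ∃ a ∈ K, ∃ φ : ℕ → ℕ, StrictMono φ ∧
      Tendsto (fun i => toWeakSpace ℝ E (x (φ i))) atTop (𝓝 (toWeakSpace ℝ E a)) := by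
  set Z := (Submodule.span ℝ (range x)).topologicalClosure
  have hxZ : ∀ n, x n ∈ Z := fun n =>
    Submodule.le_topologicalClosure _ (Submodule.subset_span ⟨n, rfl⟩)
  have hZ : IsClosed (toWeakSpace ℝ E '' Z) :=
    Z.convex.isClosed_image_toWeakSpace (Submodule.isClosed_topologicalClosure _)
  obtain ⟨F, hF⟩ : ∃ F : ℕ → StrongDual ℝ E, ∀ z ∈ Z, (∀ k, F k z = 0) → z = 0 := by
    refine TopologicalSpace.IsSeparable.exists_dual_seq_separating ?_
    rw [Submodule.topologicalClosure_coe]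
    exact (countable_range x).isSeparable.span.closure
  obtain ⟨L, -, φ, hφ, hL⟩ :=
    (isCompact_univ_pi fun k => hK.isCompact_image_dual (F k)).tendsto_subseq
      (x := fun n k => F k (x n)) fun n k _ => ⟨x n, hx n, rfl⟩
  have hcluster : ∀ w, MapClusterPt w atTop (fun i => toWeakSpace ℝ E (x (φ i))) →
      ∃ z ∈ Z, w = toWeakSpace ℝ E z ∧ ∀ k, F k z = L k := by
    intro w hw
    obtain ⟨z, hz, rfl⟩ := hZ.mem_of_mapClusterPt hw (.of_forall fun i => ⟨_, hxZ (φ i), rfl⟩)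
    exact ⟨z, hz, rfl, fun k => (hw.dual_apply (F k)).eq_of_tendsto (tendsto_pi_nhds.1 hL k)⟩
  have hK' : Tendsto (fun i => toWeakSpace ℝ E (x (φ i))) atTop (𝓟 (toWeakSpace ℝ E '' K)) :=
    tendsto_principal.2 (.of_forall fun i => ⟨_, hx (φ i), rfl⟩)
  obtain ⟨-, ⟨a, ha, rfl⟩, hacl⟩ := hK.exists_mapClusterPt hK'
  obtain ⟨za, hza, hzaeq, hFa⟩ := hcluster _ hacl
  refine ⟨a, ha, φ, hφ, hK.tendsto_nhds_of_unique_mapClusterPt (tendsto_principal.1 hK') ?_⟩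
  rintro w - hw
  obtain ⟨z, hz, hwz, hFz⟩ := hcluster w hw
  have hzza : z - za = 0 := hF _ (Z.sub_mem hz hza) fun k => by simp [hFz, hFa]
  rw [hwz, hzaeq, sub_eq_zero.1 hzza]

theorem WeaklyNull.extend_zero_of_strictMono {y : ℕ → E} (hy : WeaklyNull E y) {θ : ℕ → ℕ}
    (hθ : StrictMono θ) : WeaklyNull E (Function.extend θ y 0) := fun f => by
  simpa [Function.apply_extend, Function.comp_def, Pi.zero_def] using
    (hy f).extend_zero_of_strictMono hθ

theorem betaQ_le_alphaQ (hg : ∀ n, ‖g n‖ ≤ 1) : betaQ g ≤ alphaQ g := by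
  refine betaQ_le fun x hx hx0 => ?_
  have hK : insert 0 (range x) ⊆ closedBall (0 : E) 1 :=
    insert_subset (mem_closedBall_self zero_le_one) (range_subset_iff.2 hx)
  refine (limsup_le_limsup (.of_forall fun n => ?_) (isCoboundedUnder_le_of_le atTop fun _ =>
    abs_nonneg _) (isBoundedUnder_of_eventually_le (a := 1) (.of_forall fun n =>
      sSup_abs_image_le_one (hg n) hK))).trans (le_alphaQ hg hK hx0.weaklyCompact_insert_zero_range)
  exact le_csSup ⟨1, fun _ ⟨y, hy, ht⟩ => ht ▸ abs_apply_le_one (hg n) (hK hy)⟩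
    ⟨x n, mem_insert_of_mem _ ⟨n, rfl⟩, rfl⟩

theorem exists_weaklyNull_frequently_le_abs_apply (hg0 : WeakStarNull E g) {K : Set E}
    (hK : K ⊆ closedBall 0 1) (hKc : WeaklyCompact E K) {θ : ℕ → ℕ} (hθ : StrictMono θ)
    {x : ℕ → E} (hxK : ∀ i, x i ∈ K) {r r' : ℝ} (hrr' : r < r')
    (hx : ∀ i, r' < |g (θ i) (x i)|) :
    ∃ y : ℕ → E, (∀ n, y n ∈ closedBall (0 : E) 1) ∧ WeaklyNull E y ∧
      ∃ᶠ n in atTop, r / 2 ≤ |g n (y n)| := by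
  obtain ⟨a, haK, φ, hφ, hxa⟩ := hKc.exists_subseq_tendsto hxK
  have hψ : StrictMono (θ ∘ φ) := hθ.comp hφ
  set y : ℕ → E := fun i => (2⁻¹ : ℝ) • (x (φ i) - a)
  have hy0 : WeaklyNull E y := fun f => by
    simpa [y] using ((tendsto_toWeakSpace_iff.1 hxa f).sub_const (f a)).const_mul (2⁻¹ : ℝ)
  have hy : ∀ i, y i ∈ closedBall (0 : E) 1 := fun i => by
    have := (norm_sub_le (x (φ i)) a).trans (add_le_add (mem_closedBall_zero_iff.1 (hK (hxK _)))
      (mem_closedBall_zero_iff.1 (hK haK)))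
    rw [mem_closedBall_zero_iff, norm_smul]
    norm_num
    linarith
  set y' := Function.extend (θ ∘ φ) y 0
  have hy'ψ : ∀ i, y' ((θ ∘ φ) i) = y i := hψ.injective.extend_apply y 0
  refine ⟨y', fun n => ?_, hy0.extend_zero_of_strictMono hψ, hψ.tendsto_atTop.frequently ?_⟩
  · obtain ⟨i, rfl⟩ | hn := em (∃ i, (θ ∘ φ) i = n)
    · exact hy'ψ i ▸ hy i
    · simp [y', Function.extend_apply' _ _ _ hn]
  -- `2 |g_n (y' n)| ≥ |g_n x| - |g_n a|` with `|g_n x| > r'`, and `g_n a → 0`.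
  have hga : ∀ᶠ i in atTop, |g ((θ ∘ φ) i) a| < r' - r :=
    ((hg0 a).comp hψ.tendsto_atTop).abs.eventually (gt_mem_nhds (by simpa using hrr'))
  refine (hga.mono fun i hi => ?_).frequently
  have hxi := hx (φ i)
  have hgy : g ((θ ∘ φ) i) (y i) = 2⁻¹ * (g ((θ ∘ φ) i) (x (φ i)) - g ((θ ∘ φ) i) a) := by
    simp [y]
  rw [hy'ψ, hgy, abs_mul, abs_of_pos (by norm_num : (0 : ℝ) < 2⁻¹)]
  simp only [Function.comp_apply] at hi hxi ⊢
  linarith [abs_sub_abs_le_abs_sub (g (θ (φ i)) (x (φ i))) (g (θ (φ i)) a)]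

theorem limsup_sSup_abs_image_le_two_mul_betaQ (hg : ∀ n, ‖g n‖ ≤ 1) (hg0 : WeakStarNull E g)
    {K : Set E} (hK : K ⊆ closedBall 0 1) (hKc : WeaklyCompact E K) :
    limsup (fun n => sSup ((fun x => |g n x|) '' K)) atTop ≤ 2 * betaQ g := by
  refine le_of_forall_lt_imp_le_of_dense fun r hr => ?_
  rcases lt_or_ge r 0 with hr0 | hr0
  · linarith [betaQ_nonneg hg]
  obtain ⟨r', hrr', hr'⟩ := exists_between hr
  have hfreq : ∃ᶠ n in atTop, ∃ x ∈ K, r' < |g n x| := by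
    refine (frequently_lt_of_lt_limsup (isCoboundedUnder_le_of_le atTop fun n =>
      sSup_abs_image_nonneg (g n) K) hr').mono fun n hn => ?_
    have hne : ((fun x => |g n x|) '' K).Nonempty := nonempty_iff_ne_empty.2 fun h => by
      rw [h, Real.sSup_empty] at hn
      linarith
    obtain ⟨_, ⟨x, hx, rfl⟩, hlt⟩ := exists_lt_of_lt_csSup hne hn
    exact ⟨x, hx, hlt⟩
  obtain ⟨θ, hθ, hθx⟩ := extraction_of_frequently_atTop hfreq
  choose x hxK hx using hθx
  obtain ⟨y, hy, hy0, hfreq_y⟩ :=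
    exists_weaklyNull_frequently_le_abs_apply hg0 hK hKc hθ hxK hrr' hx
  calc r = 2 * (r / 2) := by ring
    _ ≤ 2 * limsup (fun n => |g n (y n)|) atTop := by
      gcongr
      exact le_limsup_of_frequently_le hfreq_y (isBoundedUnder_of_eventually_le (a := 1)
        (.of_forall fun n => abs_apply_le_one (hg n) (hy n)))
    _ ≤ 2 * betaQ g := by
      gcongr
      exact le_betaQ hg hy hy0

theorem alphaQ_le_two_mul_betaQ (hg : ∀ n, ‖g n‖ ≤ 1) (hg0 : WeakStarNull E g) :
    alphaQ g ≤ 2 * betaQ g :=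
  alphaQ_le_s6 fun _ hK hKc => limsup_sSup_abs_image_le_two_mul_betaQ hg hg0 hK hKc

end NormedSpace

theorem stmt6_general {X : Type*} [NormedAddCommGroup X] [NormedSpace ℝ X] :
    K2 X ≤ K1 X ∧ K1 X ≤ 2 * K2 X := by
  have hS : {f : ℕ → StrongDual ℝ X | (∀ n, ‖f n‖ ≤ 1) ∧ WeakStarNull X f}.Nonempty :=
    ⟨0, fun _ => by simp, fun _ => by simp⟩
  constructor
  · simpa only [K1, K2, one_mul, mem_ofPred_eq, and_assoc] using
      csSup_csInf_le_mul (T := fun f => {g | IsConvexBlock f g}) (u := betaQ) (v := alphaQ)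
        one_pos hS (fun f _ => ⟨f, .refl f⟩) (fun _ hf _ hg => betaQ_nonneg (hg.norm_le_s6 hf.1))
        (fun _ hf _ hg => ⟨alphaQ_nonneg_s6 (hg.norm_le_s6 hf.1), alphaQ_le_one (hg.norm_le_s6 hf.1)⟩)
        (fun _ hf _ hg => (betaQ_le_alphaQ (hg.norm_le_s6 hf.1)).trans_eq (one_mul _).symm)
  · simpa only [K1, K2, mem_ofPred_eq, and_assoc] using
      csSup_csInf_le_mul (T := fun f => {g | IsConvexBlock f g}) (u := alphaQ) (v := betaQ)
        two_pos hS (fun f _ => ⟨f, .refl f⟩) (fun _ hf _ hg => alphaQ_nonneg_s6 (hg.norm_le_s6 hf.1))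
        (fun _ hf _ hg => ⟨betaQ_nonneg (hg.norm_le_s6 hf.1), betaQ_le_one (hg.norm_le_s6 hf.1)⟩)
        (fun _ hf _ hg => alphaQ_le_two_mul_betaQ (hg.norm_le_s6 hf.1) (hg.weakStarNull hf.2))

theorem stmt6 {X : Type*} [NormedAddCommGroup X] [NormedSpace ℝ X] [CompleteSpace X] :
    K2 X ≤ K1 X ∧ K1 X ≤ 2 * K2 X :=
  stmt6_general
end
end
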